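/- Define rational numbers C_p by C_0 = 1 and Σ_{q=0}^p C_{p−q}/(2q+1)! = 0 for p ≥ 1, and let E_{2q} denote Euler numbers (coefficients in 1/cosh x = Σ E_{2q} x^{2q}/(2q)!). Then for all p ≥ 0, Σ_{q=0}^p E_{2q}·C_{p−q}/(2q)! = 2^{2p}·C_p. -/

import Mathlib

/-!
Put `F(x) = ∑ C_p x^(2p)`; the recurrence says `F(x) · sinh x / x = 1`. The doubling formula
`sinh 2x = 2 sinh x cosh x` gives `cosh x · (sinh x / x) = sinh 2x / 2x`, hence
`F(x) / cosh x = F(2x)`, and the identity is the coefficient of `x^(2p)` on both sides.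
All these series are even, so they are handled as series in `y = x²`, where `x ↦ 2x`
becomes `y ↦ 4y`.
-/

open Finset PowerSeries

/-- The formal power series cosh x = ∑ x^(2n)/(2n)!. -/
noncomputable def coshPS : PowerSeries ℚ :=
  PowerSeries.mk fun n => if n % 2 = 0 then 1 / (Nat.factorial n : ℚ) else 0

namespace PowerSeries

variable {R : Type*} [CommRing R]

theorem expand_injective (p : ℕ) (hp : p ≠ 0) :
    Function.Injective (expand p hp : R⟦X⟧ → R⟦X⟧) := fun f g h => by
  ext n
  rw [← coeff_expand_mul p hp f, h, coeff_expand_mul]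

theorem rescale_expand (p : ℕ) (hp : p ≠ 0) (a : R) (f : R⟦X⟧) :
    rescale a (expand p hp f) = expand p hp (rescale (a ^ p) f) := by
  ext n
  rw [coeff_rescale, coeff_expand, coeff_expand]
  split_ifs with h
  · obtain ⟨m, rfl⟩ := h
    rw [coeff_rescale, Nat.mul_div_cancel_left _ (Nat.pos_of_ne_zero hp), pow_mul]
  · rw [mul_zero]

theorem expand_two_mk_comp_two_mul (f : ℕ → R) :
    expand 2 two_ne_zero (mk fun q => f (2 * q)) = mk fun n => if n % 2 = 0 then f n else 0 := by
  ext n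
  rw [coeff_expand, coeff_mk, coeff_mk]
  by_cases h : 2 ∣ n
  · rw [if_pos h, if_pos (Nat.mod_eq_zero_of_dvd h), Nat.mul_div_cancel' h]
  · rw [if_neg h, if_neg (mt Nat.dvd_of_mod_eq_zero h)]

theorem coeff_mk_mul_mk (f g : ℕ → R) (n : ℕ) :
    coeff n (mk f * mk g) = ∑ k ∈ range (n + 1), f k * g (n - k) := by
  simp only [coeff_mul, coeff_mk, Nat.sum_antidiagonal_eq_sum_range_succ fun i j => f i * g j]

theorem mul_eq_rescale_of_mul_eq_one {u v f g : R⟦X⟧} (a : R) (hu : u * v = 1)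
    (hf : f * g = 1) (hvg : v * g = rescale a g) : u * f = rescale a f :=
  left_inv_eq_right_inv (b := u * f) (a := rescale a g)
    (by rw [← hvg, mul_mul_mul_comm, hu, hf, one_mul])
    (by rw [← map_mul, mul_comm, hf, map_one])

end PowerSeries

-- `cosh √y` and `sinh √y / √y`.
noncomputable def coshSqrtPS : ℚ⟦X⟧ :=
  mk fun q => 1 / ((2 * q).factorial : ℚ)

noncomputable def sinhcSqrtPS : ℚ⟦X⟧ :=
  mk fun q => 1 / ((2 * q + 1).factorial : ℚ)

noncomputable def sinhPS : ℚ⟦X⟧ :=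
  X * expand 2 two_ne_zero sinhcSqrtPS

theorem expand_coshSqrtPS : expand 2 two_ne_zero coshSqrtPS = coshPS :=
  expand_two_mk_comp_two_mul fun n => 1 / (n.factorial : ℚ)

theorem expand_sinhcSqrtPS : expand 2 two_ne_zero sinhcSqrtPS =
    mk fun n => if n % 2 = 0 then 1 / ((n + 1).factorial : ℚ) else 0 :=
  expand_two_mk_comp_two_mul fun n => 1 / ((n + 1).factorial : ℚ)

theorem two_smul_coshPS : (2 : ℚ) • coshPS = exp ℚ + rescale (-1) (exp ℚ) := by
  ext n
  rw [map_smul, map_add, coeff_rescale, coeff_exp]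
  simp only [coshPS, coeff_mk, smul_eq_mul, Algebra.algebraMap_self, RingHom.id_apply]
  split_ifs with h
  · rw [Even.neg_one_pow (Nat.even_iff.2 h)]; ring
  · rw [Odd.neg_one_pow (Nat.odd_iff.2 (by omega))]; ring

theorem two_smul_sinhPS : (2 : ℚ) • sinhPS = exp ℚ - rescale (-1) (exp ℚ) := by
  ext n
  rw [map_smul, map_sub, coeff_rescale, coeff_exp, sinhPS, expand_sinhcSqrtPS]
  rcases n with _ | m
  · simp
  rw [coeff_succ_X_mul, coeff_mk]
  simp only [smul_eq_mul, Algebra.algebraMap_self, RingHom.id_apply]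
  split_ifs with h
  · rw [Odd.neg_one_pow (by grind)]; ring
  · rw [Even.neg_one_pow (by grind)]; ring

theorem two_smul_coshPS_mul_sinhPS : (2 : ℚ) • (coshPS * sinhPS) = rescale 2 sinhPS := by
  set e := exp ℚ
  have hexp (a b : ℚ) : rescale a e * rescale b e = rescale (a + b) e :=
    exp_mul_exp_eq_exp_add a b
  apply smul_right_injective _ (two_ne_zero : (2 : ℚ) ≠ 0)
  calc (2 : ℚ) • (2 : ℚ) • (coshPS * sinhPS)
        = ((2 : ℚ) • sinhPS) * ((2 : ℚ) • coshPS) := by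
        rw [smul_mul_smul_comm, smul_smul, mul_comm sinhPS]
    _ = rescale 1 e * rescale 1 e - rescale (-1) e * rescale (-1) e := by
        rw [two_smul_sinhPS, two_smul_coshPS, rescale_one, RingHom.id_apply]; ring
    _ = rescale 2 (e - rescale (-1) e) := by
        rw [hexp, hexp, map_sub, rescale_rescale]; norm_num
    _ = (2 : ℚ) • rescale 2 sinhPS := by
        rw [← two_smul_sinhPS, two_smul, two_smul, map_add]

theorem coshSqrtPS_mul_sinhcSqrtPS : coshSqrtPS * sinhcSqrtPS = rescale 4 sinhcSqrtPS := by
  apply expand_injective 2 two_ne_zero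
  rw [map_mul, expand_coshSqrtPS]
  apply mul_left_cancel₀ X_ne_zero
  apply smul_right_injective _ (two_ne_zero : (2 : ℚ) ≠ 0)
  have h := two_smul_coshPS_mul_sinhPS
  rw [sinhPS, mul_left_comm, map_mul, rescale_X, rescale_expand, smul_eq_C_mul] at h
  show (2 : ℚ) • _ = (2 : ℚ) • _
  rw [smul_eq_C_mul, smul_eq_C_mul, h, mul_assoc]
  norm_num

theorem sinhcSqrtPS_mul_mk_eq_one (C : ℕ → ℚ) (hC0 : C 0 = 1)
    (hCrec : ∀ p : ℕ, 1 ≤ p →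
      ∑ q ∈ range (p + 1), C (p - q) / ((2 * q + 1).factorial : ℚ) = 0) :
    sinhcSqrtPS * mk C = 1 := by
  ext p
  rw [sinhcSqrtPS, coeff_mk_mul_mk, coeff_one]
  rcases p with _ | p
  · simp [hC0]
  · rw [if_neg p.succ_ne_zero, ← hCrec (p + 1) p.succ_pos]
    exact sum_congr rfl fun q _ => one_div_mul_eq_div _ _

theorem C_Euler_convolution (C : ℕ → ℚ) (hC0 : C 0 = 1)
    (hCrec : ∀ p : ℕ, 1 ≤ p → ∑ q ∈ Finset.range (p + 1), C (p - q) / (Nat.factorial (2 * q + 1) : ℚ) = 0)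
    (E : ℕ → ℚ)
    (hE : (PowerSeries.mk fun n => if n % 2 = 0 then E n / (Nat.factorial n : ℚ) else 0) *
        coshPS = 1)
    (p : ℕ) :
    ∑ q ∈ Finset.range (p + 1), E (2 * q) * C (p - q) / (Nat.factorial (2 * q) : ℚ) =
      2 ^ (2 * p) * C p := by
  have hEcosh : (mk fun q => E (2 * q) / ((2 * q).factorial : ℚ)) * coshSqrtPS = 1 := by
    apply expand_injective 2 two_ne_zero
    rw [map_mul, map_one, expand_coshSqrtPS, expand_two_mk_comp_two_mul fun n => E n / n.factorial]
    exact hE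
  have hEC := mul_eq_rescale_of_mul_eq_one 4 hEcosh
    (by rw [mul_comm, sinhcSqrtPS_mul_mk_eq_one C hC0 hCrec]) coshSqrtPS_mul_sinhcSqrtPS
  have hcoeff := congrArg (coeff p) hEC
  rw [coeff_mk_mul_mk, coeff_rescale, coeff_mk] at hcoeff
  rw [pow_mul, show (2 : ℚ) ^ 2 = 4 by norm_num, ← hcoeff]
  exact sum_congr rfl fun q _ => mul_div_right_comm _ _ _
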